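/- arXiv:2510.12026 — 3 statements merged into one kernel-verified Lean document; each statement's English description precedes it below -/
import Mathlib

section
/- (Series expansion of sigmoid derivatives.) For every integer k ≥ 0 and every real z < 0, the k-th derivative of the sigmoid function σ(x) = 1/(1+e^{−x}) satisfies σ^{(k)}(z) = Σ_{j=1}^{∞} (−1)^{j−1} j^k e^{jz}, where the series converges absolutely. -/
open MeasureTheory ProbabilityTheory Real Filter Finset
open scoped ENNReal NNReal

noncomputable section

/-- The sigmoid function. -/
def sigmoid (x : ℝ) : ℝ := (1 + Real.exp (-x))⁻¹

/-- The probabilists' Hermite polynomial `He_k`, as a real function. -/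
def He (k : ℕ) (z : ℝ) : ℝ := Polynomial.aeval z (Polynomial.hermite k)

/-- The standard Gaussian measure `N(0, I_d)` on `ℝ^d`. -/
def stdGaussian (d : ℕ) : Measure (Fin d → ℝ) := Measure.pi fun _ => gaussianReal 0 1

/-- Hermite coefficient `H(h, i) = E_{z ~ N(0,1)}[h(z) He_i(z)]`. -/
def hCoef (h : ℝ → ℝ) (i : ℕ) : ℝ := ∫ z, h z * He i z ∂(gaussianReal 0 1)

/-- Euclidean norm of a finitely-indexed real vector. -/
def euclNorm {ι : Type*} [Fintype ι] (v : ι → ℝ) : ℝ := Real.sqrt (∑ i, v i ^ 2)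

/-- Euclidean inner product. -/
def dotp {d : ℕ} (x y : Fin d → ℝ) : ℝ := ∑ i, x i * y i

def IsEvenPoly (g : Polynomial ℝ) : Prop := ∀ z : ℝ, g.eval (-z) = g.eval z

def IsOddPoly (g : Polynomial ℝ) : Prop := ∀ z : ℝ, g.eval (-z) = -g.eval z

open Classical in
/-- The generative exponent of a polynomial link function: `2` if it is even, `1` otherwise. -/
def geExp (g : Polynomial ℝ) : ℕ := if IsEvenPoly g then 2 else 1

/-- Normalization of the link function: mean zero and unit second moment under `N(0,1)`. -/
def gNormalized (g : Polynomial ℝ) : Prop :=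
  (∫ z, g.eval z ∂(gaussianReal 0 1)) = 0 ∧ (∫ z, (g.eval z) ^ 2 ∂(gaussianReal 0 1)) = 1

/-- `f = Θ(gfn)` as `d → ∞`. -/
def IsTheta (f gfn : ℕ → ℝ) : Prop :=
  ∃ c C : ℝ, 0 < c ∧ 0 < C ∧ ∀ᶠ d in atTop, c * gfn d ≤ f d ∧ f d ≤ C * gfn d

/-- The label-noise distribution `Unif({-τ, τ})`. -/
def signNoise (τ : ℝ) : Measure ℝ :=
  ((2 : ℝ≥0∞)⁻¹ • Measure.dirac (-τ)) + ((2 : ℝ≥0∞)⁻¹ • Measure.dirac τ)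

/-- The uniform distribution on `[-1, 1]`. -/
def unifIcc : Measure ℝ := (2 : ℝ≥0∞)⁻¹ • volume.restrict (Set.Icc (-1 : ℝ) 1)

/-- `Unif({±1}^m)`. -/
def signVec (m : ℕ) : Measure (Fin m → ℝ) := Measure.pi fun _ => signNoise 1

/-- `Unif([-1,1]^m)`. -/
def unifCube (m : ℕ) : Measure (Fin m → ℝ) := Measure.pi fun _ => unifIcc

/-- The Gaussian single-index sample distribution `D_β` of `(x, y)`,
with `x ~ N(0, I_d)` and `y = g(⟨β, x⟩) + ζ`, `ζ ~ Unif({-τ, τ})`. -/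
def singleIndex (d : ℕ) (g : Polynomial ℝ) (β : Fin d → ℝ) (τ : ℝ) :
    Measure ((Fin d → ℝ) × ℝ) :=
  ((stdGaussian d).prod (signNoise τ)).map fun p => (p.1, g.eval (dotp β p.1) + p.2)

/-- Index type for the quadratic input embedding: a constant coordinate, the linear
coordinates, the (normalized) square coordinates, and the pairwise products. -/
def EmbIx (d : ℕ) : Type := Unit ⊕ Fin d ⊕ Fin d ⊕ {p : Fin d × Fin d // p.1 < p.2}

instance (d : ℕ) : Fintype (EmbIx d) := by unfold EmbIx; infer_instance

/-- The quadratic input embedding `φ : ℝ^d → ℝ^{d̃}`. -/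
def phi {d : ℕ} (θ : Fin d → ℝ) : EmbIx d → ℝ
  | Sum.inl _ => 1
  | Sum.inr (Sum.inl i) => θ i
  | Sum.inr (Sum.inr (Sum.inl i)) => (θ i ^ 2 - 1) / Real.sqrt 2
  | Sum.inr (Sum.inr (Sum.inr p)) => θ p.1.1 * θ p.1.2

/-- The vector `ψ(θ, c₀, c₁, c₂) ∈ ℝ^{d̃}`. -/
def psi {d : ℕ} (θ : Fin d → ℝ) (c0 c1 c2 : ℝ) : EmbIx d → ℝ
  | Sum.inl _ => c0
  | Sum.inr (Sum.inl i) => c1 * θ i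
  | Sum.inr (Sum.inr (Sum.inl i)) => c2 * θ i ^ 2 / Real.sqrt 2
  | Sum.inr (Sum.inr (Sum.inr p)) => c2 * θ p.1.1 * θ p.1.2

/-- Initialization `γ(0) = (γ², 1, …, 1, γ, …, γ)`. -/
def gammaInit (d : ℕ) (γsc : ℝ) : EmbIx d → ℝ
  | Sum.inl _ => γsc ^ 2
  | Sum.inr (Sum.inl _) => 1
  | Sum.inr (Sum.inr _) => γsc

/-- The gate `G_{j, N+1}(Z)` of a prompt whose context labels are `y` (and whose query
carries label `0`), for gating vector `w = (0, ρ⁻¹)` and bias `b`. -/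
def gate (ρ b : ℝ) {N : ℕ} (y : Fin N → ℝ) (j : Fin N) : ℝ :=
  _root_.sigmoid (y j / ρ + b) * (1 - _root_.sigmoid b) *
    ∏ k ∈ Finset.univ.filter (fun k => j < k), (1 - _root_.sigmoid (y k / ρ + b))

/-- The last coordinate of the final output of the simplified one-layer Mamba:
`Mamba(Z; γ)[d̃+1, N+1] = Σ_j G_{j,N+1}(Z) y_j φ(x_j)ᵀ (γ ⊙ φ(x))`. -/
def mambaOut {d N : ℕ} (ρ b : ℝ) (γ : EmbIx d → ℝ)
    (ctx : Fin N → (Fin d → ℝ) × ℝ) (x : Fin d → ℝ) : ℝ :=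
  ∑ j, gate ρ b (fun k => (ctx k).2) j * (ctx j).2 *
    ∑ ix, phi (ctx j).1 ix * (γ ix * phi x ix)

/-- Two-layer ReLU MLP. -/
def mlp (m : ℕ) (u v a : Fin m → ℝ) (z : ℝ) : ℝ := ∑ k, u k * max (v k * z + a k) 0

/-- The full prediction model `f(Z; γ, u, v, a)`. -/
def predict (d N m : ℕ) (ρ b : ℝ) (γ : EmbIx d → ℝ) (u v a : Fin m → ℝ)
    (ctx : Fin N → (Fin d → ℝ) × ℝ) (x : Fin d → ℝ) : ℝ :=
  mlp m u v a ((N : ℝ)⁻¹ * mambaOut ρ b γ ctx x)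

/-- Truncation `ḡ_*` of the rescaled link function. -/
def gbar (g : Polynomial ℝ) (ρ : ℝ) (d : ℕ) (z : ℝ) : ℝ :=
  if |g.eval z / ρ| ≤ 1 / Real.log d then g.eval z / ρ else 0

/-- The function `A(z)` appearing in the analysis of the gated label average. -/
def Afun (g : Polynomial ℝ) (ρ b τ : ℝ) (d : ℕ) (z : ℝ) : ℝ :=
  (1 / 2) * ((ρ * gbar g ρ d z + τ) * _root_.sigmoid (gbar g ρ d z + τ / ρ + b)
    + (ρ * gbar g ρ d z - τ) * _root_.sigmoid (gbar g ρ d z - τ / ρ + b))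

/-- Hermite coefficients `a_p = H(A, p)`. -/
def aCoef (g : Polynomial ℝ) (τ ρ b : ℝ) (d : ℕ) (p : ℕ) : ℝ := hCoef (Afun g ρ b τ d) p

/-- `B(z) = g_*(z) 𝟙[a₀γ² + a₁ z + a₂ γ He₂(z) > 0]`. -/
def Bfun (g : Polynomial ℝ) (a0 a1 a2 γsc : ℝ) (z : ℝ) : ℝ :=
  g.eval z * (if 0 < a0 * γsc ^ 2 + a1 * z + a2 * γsc * He 2 z then 1 else 0)

/-- Set defining `e_p(g)`. -/
def eSet (g : Polynomial ℝ) (p : ℕ) : Set ℕ :=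
  {i : ℕ | 1 ≤ i ∧ hCoef (fun z => g.eval z ^ i) p ≠ 0}

/-- `e_p(g) = min {i ≥ 1 : H(g^i, p) ≠ 0}` (junk value if the set is empty). -/
def eExp (g : Polynomial ℝ) (p : ℕ) : ℕ := sInf (eSet g p)

/-- The uniform distribution on the unit sphere of the coordinate subspace supported on `I`,
realized as the pushforward of a standard Gaussian by normalization. -/
def unifSphere (d : ℕ) (I : Finset (Fin d)) : Measure (Fin d → ℝ) :=
  (stdGaussian d).map fun x i => (if i ∈ I then x i else 0) / Real.sqrt (∑ j ∈ I, x j ^ 2)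

/-- A task sample: feature vector, `N` context examples, and a query pair. -/
abbrev TaskSample (d N : ℕ) :=
  (Fin d → ℝ) × ((Fin N → (Fin d → ℝ) × ℝ) × ((Fin d → ℝ) × ℝ))

/-- Distribution of the (contexts, query) part of a prompt drawn from `D_β`. -/
def promptDist (d N : ℕ) (g : Polynomial ℝ) (β : Fin d → ℝ) (τ : ℝ) :
    Measure ((Fin N → (Fin d → ℝ) × ℝ) × ((Fin d → ℝ) × ℝ)) :=
  (Measure.pi fun _ : Fin N => singleIndex d g β τ).prod (singleIndex d g β τ)

/-- The ICL task distribution `D(N)`: draw `β ~ Unif(S_r)`, then a prompt from `D_β`. -/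
def taskDist (d N : ℕ) (g : Polynomial ℝ) (I : Finset (Fin d)) (τ : ℝ) :
    Measure (TaskSample d N) :=
  (unifSphere d I).bind fun β => (promptDist d N g β τ).map fun p => (β, p)

/-- Pre-activation `N⁻¹ Mamba(Z; γ(0))[d̃+1, N+1]` at initialization. -/
def preactInit (d N : ℕ) (ρ b γsc : ℝ) (s : TaskSample d N) : ℝ :=
  (N : ℝ)⁻¹ * mambaOut ρ b (gammaInit d γsc) s.2.1 s.2.2.1

/-- The (a.e.) gradient in `γ` of the model output at initialization. -/
def gradFInit (d N : ℕ) (ρ b γsc : ℝ) (s : TaskSample d N) : EmbIx d → ℝ := fun ix =>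
  (if 0 < preactInit d N ρ b γsc s then 1 else 0) *
    ((N : ℝ)⁻¹ * ∑ j, gate ρ b (fun k => (s.2.1 k).2) j * (s.2.1 j).2 *
      (phi (s.2.1 j).1 ix * phi s.2.2.1 ix))

/-- Stage-I one-step gradient descent update of the Mamba parameter `γ`
on the `ℓ₂`-regularized empirical squared loss over `T` tasks. -/
def stageIUpdate (d N T : ℕ) (ρ b γsc η lam : ℝ) (S : Fin T → TaskSample d N) :
    EmbIx d → ℝ := fun ix =>
  gammaInit d γsc ix -
    η * (((T : ℝ)⁻¹ * ∑ t, 2 * (max (preactInit d N ρ b γsc (S t)) 0 - (S t).2.2.2) *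
        gradFInit d N ρ b γsc (S t) ix) + lam * gammaInit d γsc ix)

/-- The Stage-II ridge objective `L₂(γ, u, v, a) + (λ₂/2)‖u‖²`. -/
def ridgeObj (d N m T : ℕ) (ρ b lam2 : ℝ) (γ : EmbIx d → ℝ) (v a : Fin m → ℝ)
    (S : Fin T → TaskSample d N) (u : Fin m → ℝ) : ℝ :=
  (T : ℝ)⁻¹ * ∑ t, (predict d N m ρ b γ u v a (S t).2.1 (S t).2.2.1 - (S t).2.2.2) ^ 2 +
    lam2 / 2 * ∑ k, u k ^ 2

/-- The ICL test error `R_N(γ, u, v, a)`. -/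
def risk (d N m : ℕ) (g : Polynomial ℝ) (I : Finset (Fin d)) (τ ρ b : ℝ)
    (γ : EmbIx d → ℝ) (u v a : Fin m → ℝ) : ℝ :=
  ∫ s, |predict d N m ρ b γ u v a s.2.1 s.2.2.1 - s.2.2.2| ∂(taskDist d N g I τ)


/-! Writing `w = e^z`, for `z < 0` we have `σ(z) = w / (1 + w) = ∑_{j ≥ 0} (-1)^j w^{j+1}`, a
geometric series. A series `∑ a_j e^{(j+1)z}` with bounded coefficients can be differentiated
termwise on `z < 0`: on each half-line `z < c < 0` the differentiated series is dominated by the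
summable `∑ (j+1)^{k+1} e^{(j+1)c}`, and each differentiation multiplies the `j`-th term by `j + 1`. -/

open Set

section ExpSeries

variable {a : ℕ → ℝ} {C : ℝ}

lemma summable_pow_mul_exp_mul (k : ℕ) {x : ℝ} (hx : x < 0) :
    Summable fun j : ℕ => ((j : ℝ) + 1) ^ k * exp (((j : ℝ) + 1) * x) := by
  have hq : ‖exp x‖ < 1 := by rwa [norm_of_nonneg (exp_pos x).le, exp_lt_one_iff]
  have h := (summable_nat_add_iff (f := fun n : ℕ => (n : ℝ) ^ k * exp x ^ n) 1).mpr
    (summable_pow_mul_geometric_of_norm_lt_one k hq)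
  refine h.congr fun j => ?_
  rw [← exp_nat_mul]
  push_cast
  ring_nf

lemma abs_mul_pow_mul_exp_mul_le (hC : ∀ j, |a j| ≤ C) (k j : ℕ) (x : ℝ) :
    |a j * ((j : ℝ) + 1) ^ k * exp (((j : ℝ) + 1) * x)| ≤
      C * (((j : ℝ) + 1) ^ k * exp (((j : ℝ) + 1) * x)) := by
  have hpos : 0 ≤ ((j : ℝ) + 1) ^ k * exp (((j : ℝ) + 1) * x) := by positivity
  rw [mul_assoc, abs_mul, abs_of_nonneg hpos]
  exact mul_le_mul_of_nonneg_right (hC j) hpos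

lemma summable_abs_mul_pow_mul_exp_mul (hC : ∀ j, |a j| ≤ C) (k : ℕ) {x : ℝ} (hx : x < 0) :
    Summable fun j : ℕ => |a j * ((j : ℝ) + 1) ^ k * exp (((j : ℝ) + 1) * x)| :=
  .of_nonneg_of_le (fun _ => abs_nonneg _) (abs_mul_pow_mul_exp_mul_le hC k · x)
    ((summable_pow_mul_exp_mul k hx).mul_left C)

lemma hasDerivAt_mul_pow_mul_exp_mul (c : ℝ) (k j : ℕ) (x : ℝ) :
    HasDerivAt (fun y => c * ((j : ℝ) + 1) ^ k * exp (((j : ℝ) + 1) * y))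
      (c * ((j : ℝ) + 1) ^ (k + 1) * exp (((j : ℝ) + 1) * x)) x :=
  ((((hasDerivAt_id' x).const_mul ((j : ℝ) + 1)).exp).const_mul
    (c * ((j : ℝ) + 1) ^ k)).congr_deriv (by ring)

lemma hasDerivAt_tsum_mul_pow_mul_exp_mul (hC : ∀ j, |a j| ≤ C) (k : ℕ) {x : ℝ} (hx : x < 0) :
    HasDerivAt (fun y => ∑' j : ℕ, a j * ((j : ℝ) + 1) ^ k * exp (((j : ℝ) + 1) * y))
      (∑' j : ℕ, a j * ((j : ℝ) + 1) ^ (k + 1) * exp (((j : ℝ) + 1) * x)) x := by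
  have hx_mem : x ∈ Iio (x / 2) := by rw [Set.mem_Iio]; linarith
  have hdom := (summable_pow_mul_exp_mul (k + 1) (by linarith : x / 2 < 0)).mul_left C
  refine hasDerivAt_tsum_of_isPreconnected hdom isOpen_Iio isPreconnected_Iio
    (fun j y _ => hasDerivAt_mul_pow_mul_exp_mul (a j) k j y) (fun j y hy => ?_) hx_mem
    (summable_abs_mul_pow_mul_exp_mul hC k hx).of_abs hx_mem
  have hexp : exp (((j : ℝ) + 1) * y) ≤ exp (((j : ℝ) + 1) * (x / 2)) :=
    exp_le_exp.mpr (mul_le_mul_of_nonneg_left hy.le (by positivity))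
  have hC0 : 0 ≤ C := (abs_nonneg _).trans (hC 0)
  calc ‖a j * ((j : ℝ) + 1) ^ (k + 1) * exp (((j : ℝ) + 1) * y)‖
      ≤ C * (((j : ℝ) + 1) ^ (k + 1) * exp (((j : ℝ) + 1) * y)) :=
        abs_mul_pow_mul_exp_mul_le hC (k + 1) j y
    _ ≤ C * (((j : ℝ) + 1) ^ (k + 1) * exp (((j : ℝ) + 1) * (x / 2))) := by gcongr

lemma iteratedDeriv_eqOn_tsum_mul_pow_mul_exp_mul {f : ℝ → ℝ}
    (hf : EqOn f (fun y => ∑' j : ℕ, a j * exp (((j : ℝ) + 1) * y)) (Iio 0))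
    (hC : ∀ j, |a j| ≤ C) (k : ℕ) :
    EqOn (iteratedDeriv k f)
      (fun y => ∑' j : ℕ, a j * ((j : ℝ) + 1) ^ k * exp (((j : ℝ) + 1) * y)) (Iio 0) := by
  induction k with
  | zero => simpa only [iteratedDeriv_zero, pow_zero, mul_one] using hf
  | succ k ih =>
    intro x hx
    rw [iteratedDeriv_succ, (ih.eventuallyEq_of_mem (isOpen_Iio.mem_nhds hx)).deriv_eq]
    exact (hasDerivAt_tsum_mul_pow_mul_exp_mul hC k hx).deriv

end ExpSeries

lemma hasSum_sigmoid {z : ℝ} (hz : z < 0) :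
    HasSum (fun j : ℕ => (-1 : ℝ) ^ j * exp (((j : ℝ) + 1) * z)) (_root_.sigmoid z) := by
  have hq : ‖-exp z‖ < 1 := by rwa [norm_neg, norm_of_nonneg (exp_pos z).le, exp_lt_one_iff]
  have hsigmoid : _root_.sigmoid z = exp z * (1 - -exp z)⁻¹ := by
    rw [_root_.sigmoid, exp_neg, sub_neg_eq_add]
    field_simp
    ring
  rw [hsigmoid]
  refine ((hasSum_geometric_of_norm_lt_one hq).mul_left (exp z)).congr_fun fun j => ?_
  rw [add_one_mul, exp_add, exp_nat_mul, neg_pow]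
  ring

/-- **Series expansion of sigmoid derivatives**: for every `k ≥ 0` and `z < 0`,
`σ^{(k)}(z) = Σ_{j=1}^∞ (-1)^{j-1} j^k e^{jz}`, the series converging absolutely. -/
theorem sigmoid_iteratedDeriv_series (k : ℕ) (z : ℝ) (hz : z < 0) :
    Summable (fun j : ℕ => |(-1 : ℝ) ^ j * ((j : ℝ) + 1) ^ k * Real.exp (((j : ℝ) + 1) * z)|) ∧
    HasSum (fun j : ℕ => (-1 : ℝ) ^ j * ((j : ℝ) + 1) ^ k * Real.exp (((j : ℝ) + 1) * z))
      (iteratedDeriv k _root_.sigmoid z) := by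
  have hcoef : ∀ j : ℕ, |(-1 : ℝ) ^ j| ≤ 1 := by simp
  have habs := summable_abs_mul_pow_mul_exp_mul hcoef k hz
  refine ⟨habs, ?_⟩
  rw [iteratedDeriv_eqOn_tsum_mul_pow_mul_exp_mul (fun y hy => (hasSum_sigmoid hy).tsum_eq.symm)
    hcoef k hz]
  exact habs.of_abs.hasSum

end
end

section
/- (Lemma A.6, sigmoid derivative bounds in the far-left tail.) For every integer k ≥ 0 and every real z < −k − 2, the k-th derivative of the sigmoid function satisfies e^z/2 ≤ σ^{(k)}(z) ≤ 2 e^z. -/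
/-!
For `x < 0`, `σ(x) = eˣ / (1 + eˣ) = ∑ₙ (-1)ⁿ e^{(n+1)x}`, and the series may be differentiated
termwise, so `σ⁽ᵏ⁾(z) = ∑ₙ (-1)ⁿ (n+1)ᵏ e^{(n+1)z}`. The term `n = 0` is `e^z`. Since
`n + 1 ≤ eⁿ` and `z + k ≤ -2`, the `n`-th term is at most `e^z e^{-2n}` in absolute value, and
`∑_{n ≥ 1} e^{-2n} = 1 / (e² - 1) ≤ 1 / 2`.
-/

open MeasureTheory ProbabilityTheory Real Filter Finset
open scoped ENNReal NNReal

noncomputable section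

open scoped Topology

/-- The `k`-th derivative of the `n`-th term of `σ(x) = ∑ₙ (-1)ⁿ e^{(n+1)x}` (for `x < 0`). -/
def sigmoidSeriesTerm (k n : ℕ) (x : ℝ) : ℝ :=
  (-1) ^ n * ((n : ℝ) + 1) ^ k * exp ((n + 1) * x)

lemma norm_sigmoidSeriesTerm (k n : ℕ) (x : ℝ) :
    ‖sigmoidSeriesTerm k n x‖ = ((n : ℝ) + 1) ^ k * exp ((n + 1) * x) := by
  simp only [sigmoidSeriesTerm, norm_mul, norm_pow, norm_neg, norm_one, one_pow, one_mul,
    Real.norm_eq_abs, abs_of_pos (exp_pos _)]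
  rw [abs_of_nonneg (by positivity)]

lemma hasDerivAt_sigmoidSeriesTerm (k n : ℕ) (x : ℝ) :
    HasDerivAt (sigmoidSeriesTerm k n) (sigmoidSeriesTerm (k + 1) n x) x := by
  have h := (((hasDerivAt_id x).const_mul ((n : ℝ) + 1)).exp).const_mul
    ((-1 : ℝ) ^ n * ((n : ℝ) + 1) ^ k)
  exact h.congr_deriv (by simp only [sigmoidSeriesTerm, id]; ring)

lemma summable_pow_mul_exp {x : ℝ} (hx : x < 0) (k : ℕ) :
    Summable fun n : ℕ => ((n : ℝ) + 1) ^ k * exp ((n + 1) * x) := by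
  have hr : ‖exp x‖ < 1 := by rwa [Real.norm_of_nonneg (exp_pos x).le, exp_lt_one_iff]
  have h := (summable_nat_add_iff (f := fun n : ℕ => (n : ℝ) ^ k * exp x ^ n) 1).mpr
    (summable_pow_mul_geometric_of_norm_lt_one k hr)
  refine h.congr fun n => ?_
  rw [← exp_nat_mul]
  push_cast
  rfl

lemma summable_sigmoidSeriesTerm {x : ℝ} (hx : x < 0) (k : ℕ) :
    Summable fun n => sigmoidSeriesTerm k n x :=
  .of_norm <| (summable_pow_mul_exp hx k).congr fun n => (norm_sigmoidSeriesTerm k n x).symm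

lemma hasDerivAt_tsum_sigmoidSeriesTerm {x : ℝ} (hx : x < 0) (k : ℕ) :
    HasDerivAt (fun y => ∑' n, sigmoidSeriesTerm k n y)
      (∑' n, sigmoidSeriesTerm (k + 1) n x) x := by
  have hx_mem : x < x / 2 := by linarith
  refine hasDerivAt_tsum_of_isPreconnected
    (summable_pow_mul_exp (x := x / 2) (by linarith) (k + 1)) isOpen_Iio isPreconnected_Iio
    (fun n y _ => hasDerivAt_sigmoidSeriesTerm k n y)
    (fun n y hy => ?_) hx_mem (summable_sigmoidSeriesTerm hx k) hx_mem
  rw [norm_sigmoidSeriesTerm]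
  gcongr
  exact hy.le

lemma hasSum_sigmoidSeriesTerm_zero {x : ℝ} (hx : x < 0) :
    HasSum (fun n => sigmoidSeriesTerm 0 n x) (_root_.sigmoid x) := by
  have hr : ‖-exp x‖ < 1 := by rwa [norm_neg, Real.norm_of_nonneg (exp_pos x).le, exp_lt_one_iff]
  have hsig : _root_.sigmoid x = exp x * (1 - -exp x)⁻¹ := by
    rw [_root_.sigmoid, exp_neg, sub_neg_eq_add]
    field_simp
    ring
  rw [hsig]
  refine ((hasSum_geometric_of_norm_lt_one hr).mul_left (exp x)).congr_fun fun n => ?_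
  rw [sigmoidSeriesTerm, add_mul, one_mul, exp_add, exp_nat_mul, neg_pow]
  ring

lemma iteratedDeriv_sigmoid_eq_tsum (k : ℕ) {x : ℝ} (hx : x < 0) :
    iteratedDeriv k _root_.sigmoid x = ∑' n, sigmoidSeriesTerm k n x := by
  induction k generalizing x with
  | zero => rw [iteratedDeriv_zero, (hasSum_sigmoidSeriesTerm_zero hx).tsum_eq]
  | succ k ih =>
    have hloc : iteratedDeriv k _root_.sigmoid =ᶠ[𝓝 x] fun y => ∑' n, sigmoidSeriesTerm k n y :=
      eventuallyEq_of_mem (Iio_mem_nhds hx) fun y hy => ih hy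
    rw [iteratedDeriv_succ, hloc.deriv_eq, (hasDerivAt_tsum_sigmoidSeriesTerm hx k).deriv]

lemma norm_sigmoidSeriesTerm_le {k : ℕ} {z : ℝ} (hz : z ≤ -(k : ℝ) - 2) (n : ℕ) :
    ‖sigmoidSeriesTerm k n z‖ ≤ exp z * exp (-2) ^ n := by
  rw [norm_sigmoidSeriesTerm, ← exp_nat_mul]
  calc ((n : ℝ) + 1) ^ k * exp ((n + 1) * z)
      ≤ exp n ^ k * exp ((n + 1) * z) := by
        gcongr
        exact add_one_le_exp _
    _ = exp (z + n * (k + z)) := by rw [← exp_nat_mul, ← exp_add]; ring_nf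
    _ ≤ exp (z + n * -2) := by gcongr; linarith
    _ = exp z * exp (n * -2) := exp_add _ _

lemma tsum_exp_neg_two_pow_succ_le : ∑' n : ℕ, exp (-2) ^ (n + 1) ≤ 1 / 2 := by
  have h0 : 0 ≤ exp (-2) := (exp_pos _).le
  have h1 : exp (-2) ≤ 1 / 3 := by
    rw [exp_neg, one_div]
    gcongr
    linarith [add_one_lt_exp (two_ne_zero (α := ℝ))]
  simp_rw [pow_succ']
  rw [tsum_mul_left, tsum_geometric_of_lt_one h0 (by linarith), ← div_eq_mul_inv,
    div_le_iff₀ (by linarith)]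
  linarith

lemma abs_tsum_sigmoidSeriesTerm_sub_exp_le {k : ℕ} {z : ℝ} (hz : z ≤ -(k : ℝ) - 2) :
    |∑' n, sigmoidSeriesTerm k n z - exp z| ≤ exp z / 2 := by
  have hsum := summable_sigmoidSeriesTerm (by linarith [(Nat.cast_nonneg k : (0 : ℝ) ≤ k)]) k
  have htail : Summable fun n => ‖sigmoidSeriesTerm k (n + 1) z‖ :=
    (summable_nat_add_iff (f := fun n => ‖sigmoidSeriesTerm k n z‖) 1).mpr hsum.norm
  have hgeom : Summable fun n : ℕ => exp z * exp (-2) ^ (n + 1) :=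
    ((summable_geometric_of_lt_one (exp_pos (-2)).le (exp_lt_one_iff.mpr (by norm_num))).mul_left
      (exp (-2))).mul_left (exp z) |>.congr fun n => by ring
  have hhead : sigmoidSeriesTerm k 0 z = exp z := by simp [sigmoidSeriesTerm]
  rw [hsum.tsum_eq_zero_add, hhead, add_sub_cancel_left]
  calc |∑' n, sigmoidSeriesTerm k (n + 1) z|
      ≤ ∑' n, ‖sigmoidSeriesTerm k (n + 1) z‖ := norm_tsum_le_tsum_norm htail
    _ ≤ ∑' n, exp z * exp (-2) ^ (n + 1) :=
        htail.tsum_le_tsum (fun n => norm_sigmoidSeriesTerm_le hz (n + 1)) hgeom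
    _ ≤ exp z * (1 / 2) := by
        rw [tsum_mul_left]
        gcongr
        exact tsum_exp_neg_two_pow_succ_le
    _ = exp z / 2 := by ring

/-- **Lemma A.6** (sigmoid derivative bounds in the far-left tail): for every `k ≥ 0`
and `z < -k - 2`, `e^z / 2 ≤ σ^{(k)}(z) ≤ 2 e^z`. -/
theorem sigmoid_iteratedDeriv_bounds (k : ℕ) (z : ℝ) (hz : z < -(k : ℝ) - 2) :
    Real.exp z / 2 ≤ iteratedDeriv k _root_.sigmoid z ∧ iteratedDeriv k _root_.sigmoid z ≤ 2 * Real.exp z := by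
  have hz0 : z < 0 := by linarith [(Nat.cast_nonneg k : (0 : ℝ) ≤ k)]
  have hclose := abs_tsum_sigmoidSeriesTerm_sub_exp_le hz.le
  rw [← iteratedDeriv_sigmoid_eq_tsum k hz0, abs_le] at hclose
  constructor <;> linarith [hclose.1, hclose.2]

end
end

section
/- (Smallness of the first Hermite coefficient of the gated link for even links.) Suppose g_* is an even polynomial, and let a_0, a_1, a_2 be the first three Hermite coefficients of A, which then satisfy a_2 ≠ 0 with d^{C_b}|a_0|, d^{C_b}|a_2| = Θ̃(1) and |a_1| ≤ d^{−C} for a sufficiently large constant C > 0, and let γ = Θ((log d)^{−C_γ}). Then |E_{z~N(0,1)}[ g_*(z) · z · 1{a_0 γ² + a_1 z + a_2 γ He_2(z) > 0} ]| ≤ d^{−C'} for a sufficiently large constant C' > 0 (i.e., b_1 ≲ 1/poly(d)). -/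
open MeasureTheory ProbabilityTheory Real Filter Finset
open scoped ENNReal NNReal

noncomputable section

/-! Write the threshold as `a₂γ (z² - r) + a₁ z` with `r = 1 - a₀γ/a₂`. Against the indicator of
`a₂γ (z² - r) > 0`, which is even, `g_*(z) z` is odd and integrates to zero. The two indicators
differ only where `|z² - r| ≤ ε |z|`, `ε = |a₁| / |a₂γ|`; for `ε ≤ 1/2` this forces
`|z| ≤ M := 2 + 2|r|` and `|z² - r| ≤ εM`, a set of Lebesgue (hence Gaussian) measure at most
`4 √(εM)`, on which `|g_*(z) z| = O(M^{deg g + 1})`. The polylogarithmic bounds on `a₀, a₂, γ`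
and `|a₁| ≤ d^{-C}` give `ε ≤ d^{C_b - C + 1}` and `M ≤ d`, so the integral is
`O(d^{deg g + 2 + (C_b - C + 2)/2})`. -/

lemma He_two (z : ℝ) : He 2 z = z ^ 2 - 1 := by
  simp [He, Polynomial.hermite_succ, sq]

instance gaussianReal_zero_isNegInvariant (v : ℝ≥0) : (gaussianReal 0 v).IsNegInvariant :=
  ⟨by rw [Measure.neg_def, gaussianReal_map_neg, neg_zero]⟩

lemma integral_gaussianReal_eq_zero_of_odd {f : ℝ → ℝ} (v : ℝ≥0) (hf : ∀ z, f (-z) = -f z) :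
    ∫ z, f z ∂gaussianReal 0 v = 0 := by
  have h := integral_neg_eq_self f (gaussianReal 0 v)
  simp only [hf, integral_neg] at h
  linarith

lemma gaussianReal_le_volume (μ : ℝ) : gaussianReal μ 1 ≤ volume := by
  rw [gaussianReal_of_var_ne_zero _ one_ne_zero]
  conv_rhs => rw [← withDensity_one (μ := volume)]
  refine withDensity_mono (ae_of_all _ fun x => ENNReal.ofReal_le_one.2 ?_)
  have hsqrt : 1 ≤ √(2 * π * (1 : ℝ≥0)) :=
    Real.one_le_sqrt.2 (by push_cast; nlinarith [Real.pi_gt_three])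
  rw [gaussianPDFReal]
  refine mul_le_one₀ (inv_le_one_of_one_le₀ hsqrt) (Real.exp_nonneg _)
    (Real.exp_le_one_iff.2 ?_)
  rw [neg_div]
  exact neg_nonpos.2 (by positivity)

lemma integrable_eval_gaussianReal (p : Polynomial ℝ) (μ : ℝ) (v : ℝ≥0) :
    Integrable (fun z => p.eval z) (gaussianReal μ v) := by
  have hpow (i : ℕ) : Integrable (fun z : ℝ => z ^ i) (gaussianReal μ v) :=
    integrable_pow_of_mem_interior_integrableExpSet (X := id)
      (by simp [integrableExpSet_id_gaussianReal]) i
  simp_rw [Polynomial.eval_eq_sum_range]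
  exact integrable_finsetSum _ fun i _ => (hpow i).const_mul _

lemma abs_eval_le_sum_abs_coeff_mul_pow (p : Polynomial ℝ) {z R : ℝ} (hR : 1 ≤ R) (hz : |z| ≤ R) :
    |p.eval z| ≤ (∑ i ∈ range (p.natDegree + 1), |p.coeff i|) * R ^ p.natDegree := by
  rw [Polynomial.eval_eq_sum_range, Finset.sum_mul]
  refine (Finset.abs_sum_le_sum_abs _ _).trans (Finset.sum_le_sum fun i hi => ?_)
  rw [abs_mul, abs_pow]
  gcongr
  calc |z| ^ i ≤ R ^ i := pow_le_pow_left₀ (abs_nonneg z) hz i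
    _ ≤ R ^ p.natDegree := pow_le_pow_right₀ hR (Nat.lt_succ_iff.1 (Finset.mem_range.1 hi))

lemma abs_abs_sub_sqrt_le_sqrt {z r η : ℝ} (h : |z ^ 2 - r| ≤ η) : |(|z|) - √r| ≤ √η := by
  refine Real.abs_le_sqrt ?_
  rcases le_or_gt 0 r with hr | hr
  · have hsq : √r ^ 2 = r := Real.sq_sqrt hr
    have : |z ^ 2 - r| = |(|z|) - √r| * (|z| + √r) := by
      rw [← abs_of_nonneg (by positivity : 0 ≤ |z| + √r), ← abs_mul]
      congr 1
      nlinarith [sq_abs z]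
    have hle : |(|z|) - √r| ≤ |z| + √r := by
      simpa only [abs_abs, abs_of_nonneg (Real.sqrt_nonneg r)] using abs_sub (|z|) (√r)
    calc (|z| - √r) ^ 2 = |(|z|) - √r| * |(|z|) - √r| := by rw [← sq_abs, sq]
      _ ≤ |(|z|) - √r| * (|z| + √r) := mul_le_mul_of_nonneg_left hle (abs_nonneg _)
      _ ≤ η := this ▸ h
  · rw [Real.sqrt_eq_zero_of_nonpos hr.le, sub_zero, sq_abs]
    linarith [le_abs_self (z ^ 2 - r)]

lemma volume_setOf_abs_sq_sub_le (r η : ℝ) :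
    volume {z : ℝ | |z ^ 2 - r| ≤ η} ≤ ENNReal.ofReal (4 * √η) := by
  set c := √r
  set s := √η
  have hsub : {z : ℝ | |z ^ 2 - r| ≤ η} ⊆ Set.Icc (-c - s) (-c + s) ∪ Set.Icc (c - s) (c + s) := by
    intro z hz
    have h := abs_le.1 (abs_abs_sub_sqrt_le_sqrt hz)
    rcases le_or_gt 0 z with hz0 | hz0
    · rw [abs_of_nonneg hz0] at h
      exact Or.inr ⟨by linarith, by linarith⟩
    · rw [abs_of_neg hz0] at h
      exact Or.inl ⟨by linarith, by linarith⟩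
  calc volume {z : ℝ | |z ^ 2 - r| ≤ η}
      ≤ volume (Set.Icc (-c - s) (-c + s)) + volume (Set.Icc (c - s) (c + s)) :=
        (measure_mono hsub).trans (measure_union_le _ _)
    _ = ENNReal.ofReal (2 * s) + ENNReal.ofReal (2 * s) := by
        rw [Real.volume_Icc, Real.volume_Icc]
        congr 2 <;> ring
    _ = ENNReal.ofReal (4 * s) := by
        rw [← ENNReal.ofReal_add (by positivity) (by positivity)]
        ring_nf

lemma abs_integral_sub_le_mul_measureReal {α : Type*} [MeasurableSpace α] {μ : Measure α}
    [IsFiniteMeasure μ] {f₁ f₂ : α → ℝ} {T : Set α} {K : ℝ}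
    (heq : ∀ x ∉ T, f₁ x = f₂ x) (hK : ∀ x ∈ T, |f₁ x - f₂ x| ≤ K)
    (hf₁ : Integrable f₁ μ) (hf₂ : Integrable f₂ μ) :
    |∫ x, f₁ x ∂μ - ∫ x, f₂ x ∂μ| ≤ K * μ.real T := by
  rw [← integral_sub hf₁ hf₂,
    ← setIntegral_eq_integral_of_forall_compl_eq_zero fun x hx => sub_eq_zero.2 (heq x hx)]
  exact norm_setIntegral_le_of_norm_le_const (measure_lt_top μ T)
    fun x hx => (Real.norm_eq_abs _).trans_le (hK x hx)

lemma abs_le_of_abs_sq_sub_le_mul_abs {z r ε : ℝ} (hε : ε ≤ 1 / 2) (h : |z ^ 2 - r| ≤ ε * |z|) :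
    |z| ≤ 2 + 2 * |r| := by
  have hε' : ε * |z| ≤ |z| / 2 := by nlinarith [abs_nonneg z]
  have hz2 : |z| ^ 2 ≤ |r| + |z| / 2 := by
    rw [sq_abs]
    linarith [le_abs_self (z ^ 2 - r), le_abs_self r]
  nlinarith [abs_nonneg z, abs_nonneg r]

lemma abs_le_and_abs_sq_sub_le_of_abs_mul_le {α β r ε M z : ℝ} (hα : α ≠ 0) (hε : ε ≤ 1 / 2)
    (hβ : |β| ≤ ε * |α|) (hM : 2 + 2 * |r| ≤ M) (hz : |α * (z ^ 2 - r)| ≤ |β * z|) :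
    |z| ≤ M ∧ |z ^ 2 - r| ≤ ε * M := by
  have hαpos : 0 < |α| := abs_pos.2 hα
  have hε0 : 0 ≤ ε := nonneg_of_mul_nonneg_left ((abs_nonneg β).trans hβ) hαpos
  have h1 : |z ^ 2 - r| ≤ ε * |z| := by
    refine le_of_mul_le_mul_left ?_ hαpos
    calc |α| * |z ^ 2 - r| ≤ |β| * |z| := by rwa [← abs_mul, ← abs_mul]
      _ ≤ |α| * (ε * |z|) := by nlinarith [abs_nonneg z]
  have h2 : |z| ≤ M := (abs_le_of_abs_sq_sub_le_mul_abs hε h1).trans hM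
  exact ⟨h2, h1.trans (mul_le_mul_of_nonneg_left h2 hε0)⟩

lemma add_pos_iff_of_abs_lt {u v : ℝ} (h : |v| < |u|) : 0 < u + v ↔ 0 < u := by
  constructor <;> intro hp <;> cases abs_cases u <;> cases abs_cases v <;> linarith

lemma integrable_eval_mul_id_mul_ite (g : Polynomial ℝ) {u : ℝ → ℝ} (hu : Measurable u) (μ : ℝ)
    (v : ℝ≥0) :
    Integrable (fun z => g.eval z * z * (if 0 < u z then 1 else 0)) (gaussianReal μ v) := by
  have hF : Integrable (fun z => g.eval z * z) (gaussianReal μ v) :=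
    (integrable_eval_gaussianReal (g * Polynomial.X) μ v).congr
      (ae_of_all _ fun z => Polynomial.eval_mul_X)
  exact (hF.indicator (measurableSet_lt measurable_const hu : MeasurableSet {z | 0 < u z})).congr
    (ae_of_all _ fun z => by simp [Set.indicator_apply])

lemma abs_integral_even_mul_id_mul_ite_le (g : Polynomial ℝ) (hg : IsEvenPoly g) {α β r ε M : ℝ}
    (hα : α ≠ 0) (hε : ε ≤ 1 / 2) (hβ : |β| ≤ ε * |α|) (hM : 2 + 2 * |r| ≤ M) :
    |∫ z, g.eval z * z * (if 0 < α * (z ^ 2 - r) + β * z then 1 else 0) ∂gaussianReal 0 1| ≤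
      (∑ i ∈ range (g.natDegree + 1), |g.coeff i|) * M ^ (g.natDegree + 1) * (4 * √(ε * M)) := by
  set B := ∑ i ∈ range (g.natDegree + 1), |g.coeff i|
  set T := {z : ℝ | |z| ≤ M ∧ |z ^ 2 - r| ≤ ε * M}
  have hM1 : 1 ≤ M := by linarith [abs_nonneg r]
  have hodd : ∫ z, g.eval z * z * (if 0 < α * (z ^ 2 - r) then 1 else 0) ∂gaussianReal 0 1 = 0 :=
    integral_gaussianReal_eq_zero_of_odd 1 fun z => by rw [neg_sq, hg z]; ring
  have heq : ∀ z ∉ T, g.eval z * z * (if 0 < α * (z ^ 2 - r) + β * z then 1 else 0) =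
      g.eval z * z * (if 0 < α * (z ^ 2 - r) then 1 else 0) := fun z hz => by
    simp only [add_pos_iff_of_abs_lt (lt_of_not_ge fun h =>
      hz (abs_le_and_abs_sq_sub_le_of_abs_mul_le hα hε hβ hM h))]
  have hK : ∀ z ∈ T, |g.eval z * z * (if 0 < α * (z ^ 2 - r) + β * z then 1 else 0) -
      g.eval z * z * (if 0 < α * (z ^ 2 - r) then 1 else 0)| ≤ B * M ^ (g.natDegree + 1) := by
    intro z hz
    have hite : |(if 0 < α * (z ^ 2 - r) + β * z then (1 : ℝ) else 0) -
        (if 0 < α * (z ^ 2 - r) then 1 else 0)| ≤ 1 := by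
      split_ifs <;> norm_num
    rw [← mul_sub, abs_mul, abs_mul]
    calc _ ≤ B * M ^ g.natDegree * M * 1 := by
          gcongr
          exacts [abs_eval_le_sum_abs_coeff_mul_pow g hM1 hz.1, hz.1]
      _ = B * M ^ (g.natDegree + 1) := by ring
  have hμT : (gaussianReal 0 1).real T ≤ 4 * √(ε * M) :=
    ENNReal.toReal_le_of_le_ofReal (by positivity) <| (gaussianReal_le_volume 0 T).trans <|
      (measure_mono fun z hz => hz.2).trans (volume_setOf_abs_sq_sub_le r (ε * M))
  calc _ = |∫ z, g.eval z * z * (if 0 < α * (z ^ 2 - r) + β * z then 1 else 0) ∂gaussianReal 0 1 -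
        ∫ z, g.eval z * z * (if 0 < α * (z ^ 2 - r) then 1 else 0) ∂gaussianReal 0 1| := by
        rw [hodd, sub_zero]
    _ ≤ B * M ^ (g.natDegree + 1) * (gaussianReal 0 1).real T :=
        abs_integral_sub_le_mul_measureReal heq hK
          (integrable_eval_mul_id_mul_ite g (by fun_prop) 0 1)
          (integrable_eval_mul_id_mul_ite g (by fun_prop) 0 1)
    _ ≤ B * M ^ (g.natDegree + 1) * (4 * √(ε * M)) := by gcongr

lemma eventually_log_natCast_pos : ∀ᶠ d : ℕ in atTop, 0 < Real.log d :=
  (tendsto_natCast_atTop_atTop.eventually_gt_atTop 1).mono fun _ hd => Real.log_pos hd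

lemma eventually_pos_of_isTheta_log_rpow {f : ℕ → ℝ} {s : ℝ}
    (h : IsTheta f fun d => Real.log d ^ s) : ∀ᶠ d : ℕ in atTop, 0 < f d := by
  obtain ⟨c, _, hc, -, hf⟩ := h
  filter_upwards [hf, eventually_log_natCast_pos] with d hd hlog
  exact (mul_pos hc (Real.rpow_pos_of_pos hlog s)).trans_le hd.1

lemma eventually_log_pow_mul_rpow_le (k : ℕ) (s : ℝ) {c : ℝ} (hc : 0 < c) :
    ∀ᶠ d : ℕ in atTop, Real.log d ^ k * Real.log d ^ s ≤ c * d := by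
  have h := tendsto_natCast_atTop_atTop.eventually ((isLittleO_log_rpow_rpow_atTop (k + s)
    one_pos).bound hc)
  filter_upwards [h, eventually_log_natCast_pos] with d hd hlog
  rwa [Real.norm_of_nonneg (Real.rpow_nonneg hlog.le _), Real.rpow_one,
    Real.norm_of_nonneg (Nat.cast_nonneg d), Real.rpow_add hlog, Real.rpow_natCast] at hd

lemma eventually_natCast_rpow_le {s c : ℝ} (hs : s < 0) (hc : 0 < c) :
    ∀ᶠ d : ℕ in atTop, (d : ℝ) ^ s ≤ c := by
  have h := (tendsto_rpow_neg_atTop (neg_pos.2 hs)).comp tendsto_natCast_atTop_atTop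
  rw [neg_neg] at h
  exact h.eventually (ge_mem_nhds hc)

lemma eventually_abs_le_rpow_mul_abs_mul {a₁ a₂ γ : ℕ → ℝ} {Cb C Cγ c₁ : ℝ} {k : ℕ}
    (hc₁ : 0 < c₁) (hγ : IsTheta γ fun d => Real.log d ^ (-Cγ))
    (ha₂ : ∀ᶠ d : ℕ in atTop, c₁ * (Real.log d ^ k)⁻¹ ≤ (d : ℝ) ^ Cb * |a₂ d|)
    (ha₁ : ∀ᶠ d : ℕ in atTop, |a₁ d| ≤ (d : ℝ) ^ (-C)) :
    ∀ᶠ d : ℕ in atTop, |a₁ d| ≤ (d : ℝ) ^ (Cb - C + 1) * |a₂ d * γ d| := by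
  obtain ⟨cγ, _, hcγ, -, hγb⟩ := hγ
  filter_upwards [ha₂, ha₁, hγb, eventually_log_pow_mul_rpow_le k Cγ (mul_pos hc₁ hcγ),
    eventually_log_natCast_pos, eventually_gt_atTop 0] with d h₂ h₁ hγd hpoly hlog hd
  set L := Real.log d
  replace hd : (0 : ℝ) < d := Nat.cast_pos.2 hd
  have e₂ : c₁ ≤ (d : ℝ) ^ Cb * |a₂ d| * L ^ k := by
    rwa [← div_eq_mul_inv, div_le_iff₀ (by positivity)] at h₂
  have eγ : cγ ≤ |γ d| * L ^ Cγ := by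
    rw [Real.rpow_neg hlog.le, ← div_eq_mul_inv, div_le_iff₀ (by positivity)] at hγd
    exact hγd.1.trans (by gcongr; exact le_abs_self _)
  have hone : 1 ≤ (d : ℝ) ^ Cb * d * |a₂ d * γ d| := by
    refine le_of_mul_le_mul_left ?_ (mul_pos hc₁ hcγ)
    calc c₁ * cγ * 1 ≤ ((d : ℝ) ^ Cb * |a₂ d| * L ^ k) * (|γ d| * L ^ Cγ) := by
          rw [mul_one]; exact mul_le_mul e₂ eγ hcγ.le (by positivity)
      _ = (d : ℝ) ^ Cb * |a₂ d * γ d| * (L ^ k * L ^ Cγ) := by rw [abs_mul]; ring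
      _ ≤ (d : ℝ) ^ Cb * |a₂ d * γ d| * (c₁ * cγ * d) := by gcongr
      _ = c₁ * cγ * ((d : ℝ) ^ Cb * d * |a₂ d * γ d|) := by ring
  calc |a₁ d| ≤ (d : ℝ) ^ (-C) * ((d : ℝ) ^ Cb * d * |a₂ d * γ d|) :=
        h₁.trans (le_mul_of_one_le_right (by positivity) hone)
    _ = (d : ℝ) ^ (Cb - C + 1) * |a₂ d * γ d| := by
        rw [Real.rpow_add hd, Real.rpow_sub hd, Real.rpow_one, Real.rpow_neg hd.le]
        field_simp

lemma eventually_two_add_two_abs_le {a₀ a₂ γ : ℕ → ℝ} {Cb Cγ c₁ C₁ : ℝ} {k : ℕ}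
    (hc₁ : 0 < c₁) (hC₁ : 0 < C₁) (hγ : IsTheta γ fun d => Real.log d ^ (-Cγ))
    (ha₀ : ∀ᶠ d : ℕ in atTop, (d : ℝ) ^ Cb * |a₀ d| ≤ C₁ * Real.log d ^ k)
    (ha₂ : ∀ᶠ d : ℕ in atTop, c₁ * (Real.log d ^ k)⁻¹ ≤ (d : ℝ) ^ Cb * |a₂ d|) :
    ∀ᶠ d : ℕ in atTop, 2 + 2 * |1 - a₀ d * γ d / a₂ d| ≤ d := by
  have hγpos := eventually_pos_of_isTheta_log_rpow hγ
  obtain ⟨_, Cγ', -, hCγ', hγb⟩ := hγ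
  have hc : 0 < c₁ / (4 * C₁ * Cγ') := by positivity
  filter_upwards [ha₀, ha₂, hγb, hγpos, eventually_log_pow_mul_rpow_le (2 * k) (-Cγ) hc,
    eventually_log_natCast_pos, eventually_ge_atTop 8] with d h₀ h₂ hγd hγ0 hpoly hlog hd8
  set L := Real.log d
  set D := (d : ℝ) ^ Cb
  replace hd8 : (8 : ℝ) ≤ d := by exact_mod_cast hd8
  have hD : 0 < D := Real.rpow_pos_of_pos (by linarith) Cb
  have e₂ : c₁ ≤ D * |a₂ d| * L ^ k := by
    rwa [← div_eq_mul_inv, div_le_iff₀ (by positivity)] at h₂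
  have ha₂0 : 0 < |a₂ d| := (abs_nonneg _).lt_of_ne fun h => by
    rw [← h, mul_zero, zero_mul] at e₂
    linarith
  have hratio : |a₀ d * γ d / a₂ d| ≤ d / 4 := by
    rw [abs_div, abs_mul, abs_of_pos hγ0, div_le_iff₀ ha₂0]
    refine le_of_mul_le_mul_left ?_ hc₁
    calc c₁ * (|a₀ d| * γ d) ≤ (D * |a₂ d| * L ^ k) * (|a₀ d| * γ d) := by gcongr
      _ = |a₂ d| * L ^ k * γ d * (D * |a₀ d|) := by ring
      _ ≤ |a₂ d| * L ^ k * (Cγ' * L ^ (-Cγ)) * (C₁ * L ^ k) := by gcongr; exact hγd.2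
      _ = |a₂ d| * (C₁ * Cγ') * (L ^ (2 * k) * L ^ (-Cγ)) := by ring
      _ ≤ |a₂ d| * (C₁ * Cγ') * (c₁ / (4 * C₁ * Cγ') * d) := by gcongr
      _ = c₁ * (d / 4 * |a₂ d|) := by field_simp
  have h1 : |1 - a₀ d * γ d / a₂ d| ≤ 1 + d / 4 :=
    (abs_sub _ _).trans (by rw [abs_one]; linarith)
  linarith

lemma eventually_mul_pow_mul_sqrt_le (B : ℝ) (n : ℕ) {e C' : ℝ} (he : e ≤ -2 * C' - 2 * n - 5) :
    ∀ᶠ d : ℕ in atTop, B * (d : ℝ) ^ (n + 1) * (4 * √((d : ℝ) ^ e * d)) ≤ (d : ℝ) ^ (-C') := by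
  filter_upwards [tendsto_natCast_atTop_atTop.eventually_ge_atTop (4 * B),
    eventually_ge_atTop 1] with d hB hd1
  replace hd1 : (1 : ℝ) ≤ d := by exact_mod_cast hd1
  have hd : (0 : ℝ) < d := by linarith
  have hsqrt : √((d : ℝ) ^ e * d) = (d : ℝ) ^ ((e + 1) / 2) := by
    rw [← Real.rpow_add_one hd.ne', Real.sqrt_eq_rpow, ← Real.rpow_mul hd.le]
    ring_nf
  calc B * (d : ℝ) ^ (n + 1) * (4 * √((d : ℝ) ^ e * d))
      = 4 * B * ((d : ℝ) ^ (n + 1) * (d : ℝ) ^ ((e + 1) / 2)) := by rw [hsqrt]; ring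
    _ ≤ d * ((d : ℝ) ^ (n + 1) * (d : ℝ) ^ ((e + 1) / 2)) := by gcongr
    _ = (d : ℝ) ^ (1 + ((n + 1 : ℕ) : ℝ) + (e + 1) / 2) := by
        rw [Real.rpow_add hd, Real.rpow_add hd, Real.rpow_one, Real.rpow_natCast]; ring
    _ ≤ (d : ℝ) ^ (-C') := Real.rpow_le_rpow_of_exponent_le hd1 (by push_cast; linarith)

theorem even_link_first_coefficient_small_general (g : Polynomial ℝ)
    (hgev : IsEvenPoly g) :
    ∃ τ₀ : ℝ, 0 < τ₀ ∧ ∀ τ : ℝ, 0 < τ → τ ≤ τ₀ →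
      ∃ Cρ₀ Cb₀ Cγ₀ : ℝ, ∀ Cρ Cb Cγ : ℝ, Cρ₀ ≤ Cρ → Cb₀ ≤ Cb → Cγ₀ ≤ Cγ →
        ∀ ρf γf : ℕ → ℝ, IsTheta ρf (fun d => Real.log d ^ Cρ) →
          IsTheta γf (fun d => Real.log d ^ (-Cγ)) →
          ∀ C' : ℝ, 0 < C' →
            ∃ C₀ : ℝ, 0 < C₀ ∧ ∀ C : ℝ, C₀ ≤ C →
              -- hypotheses on the coefficients `a₀, a₁, a₂` of `A`
              (∀ᶠ d : ℕ in atTop, aCoef g τ (ρf d) (-(Cb * Real.log d)) d 2 ≠ 0) →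
              (∃ c₁ C₁ : ℝ, 0 < c₁ ∧ 0 < C₁ ∧ ∃ k : ℕ, ∀ᶠ d : ℕ in atTop,
                (c₁ * (Real.log d ^ k)⁻¹ ≤
                    (d : ℝ) ^ Cb * |aCoef g τ (ρf d) (-(Cb * Real.log d)) d 0| ∧
                  (d : ℝ) ^ Cb * |aCoef g τ (ρf d) (-(Cb * Real.log d)) d 0| ≤
                    C₁ * Real.log d ^ k) ∧
                (c₁ * (Real.log d ^ k)⁻¹ ≤
                    (d : ℝ) ^ Cb * |aCoef g τ (ρf d) (-(Cb * Real.log d)) d 2| ∧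
                  (d : ℝ) ^ Cb * |aCoef g τ (ρf d) (-(Cb * Real.log d)) d 2| ≤
                    C₁ * Real.log d ^ k)) →
              (∀ᶠ d : ℕ in atTop,
                |aCoef g τ (ρf d) (-(Cb * Real.log d)) d 1| ≤ (d : ℝ) ^ (-C)) →
              ∀ᶠ d : ℕ in atTop,
                |∫ z, g.eval z * z *
                    (if 0 < aCoef g τ (ρf d) (-(Cb * Real.log d)) d 0 * γf d ^ 2 +
                          aCoef g τ (ρf d) (-(Cb * Real.log d)) d 1 * z +
                          aCoef g τ (ρf d) (-(Cb * Real.log d)) d 2 * γf d * He 2 z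
                      then (1 : ℝ) else 0) ∂(gaussianReal 0 1)| ≤ (d : ℝ) ^ (-C') := by
  refine ⟨1, one_pos, fun τ _ _ => ⟨0, 0, 0, fun _ Cb Cγ _ hCb _ ρf γf _ hγ C' hC' => ?_⟩⟩
  refine ⟨Cb + 2 * C' + 2 * g.natDegree + 6, by positivity, fun C hC ha₂ hΘ ha₁ => ?_⟩
  obtain ⟨c₁, C₁, hc₁, hC₁, k, hbd⟩ := hΘ
  filter_upwards [ha₂, eventually_pos_of_isTheta_log_rpow hγ,
    eventually_abs_le_rpow_mul_abs_mul hc₁ hγ (hbd.mono fun _ h => h.2.1) ha₁,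
    eventually_two_add_two_abs_le hc₁ hC₁ hγ (hbd.mono fun _ h => h.1.2)
      (hbd.mono fun _ h => h.2.1),
    eventually_natCast_rpow_le (s := Cb - C + 1) (by linarith) one_half_pos,
    eventually_mul_pow_mul_sqrt_le (∑ i ∈ range (g.natDegree + 1), |g.coeff i|) g.natDegree
      (e := Cb - C + 1) (C' := C') (by linarith)] with d h₂ hγd hε hM hhalf hfinal
  set a := aCoef g τ (ρf d) (-(Cb * Real.log d)) d
  have hthreshold (z : ℝ) : a 0 * γf d ^ 2 + a 1 * z + a 2 * γf d * He 2 z =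
      a 2 * γf d * (z ^ 2 - (1 - a 0 * γf d / a 2)) + a 1 * z := by
    rw [He_two]
    field_simp
    ring
  simp only [hthreshold]
  exact (abs_integral_even_mul_id_mul_ite_le g hgev (mul_ne_zero h₂ hγd.ne') hhalf hε hM).trans
    hfinal

/-- **Smallness of the first Hermite coefficient of the gated link for even links.** If
`g_*` is an even polynomial and the Hermite coefficients of `A` satisfy `a₂ ≠ 0`,
`d^{C_b}|a₀|, d^{C_b}|a₂| = Θ̃(1)` and `|a₁| ≤ d^{-C}` for sufficiently large `C`, then
`|E_{z~N(0,1)}[g_*(z) z 𝟙{a₀γ² + a₁z + a₂γHe₂(z) > 0}]| ≤ d^{-C'}` for sufficiently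
large `C'`. -/
theorem even_link_first_coefficient_small (g : Polynomial ℝ) (hg : gNormalized g)
    (hgev : IsEvenPoly g) :
    ∃ τ₀ : ℝ, 0 < τ₀ ∧ ∀ τ : ℝ, 0 < τ → τ ≤ τ₀ →
      ∃ Cρ₀ Cb₀ Cγ₀ : ℝ, ∀ Cρ Cb Cγ : ℝ, Cρ₀ ≤ Cρ → Cb₀ ≤ Cb → Cγ₀ ≤ Cγ →
        ∀ ρf γf : ℕ → ℝ, IsTheta ρf (fun d => Real.log d ^ Cρ) →
          IsTheta γf (fun d => Real.log d ^ (-Cγ)) →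
          ∀ C' : ℝ, 0 < C' →
            ∃ C₀ : ℝ, 0 < C₀ ∧ ∀ C : ℝ, C₀ ≤ C →
              -- hypotheses on the coefficients `a₀, a₁, a₂` of `A`
              (∀ᶠ d : ℕ in atTop, aCoef g τ (ρf d) (-(Cb * Real.log d)) d 2 ≠ 0) →
              (∃ c₁ C₁ : ℝ, 0 < c₁ ∧ 0 < C₁ ∧ ∃ k : ℕ, ∀ᶠ d : ℕ in atTop,
                (c₁ * (Real.log d ^ k)⁻¹ ≤
                    (d : ℝ) ^ Cb * |aCoef g τ (ρf d) (-(Cb * Real.log d)) d 0| ∧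
                  (d : ℝ) ^ Cb * |aCoef g τ (ρf d) (-(Cb * Real.log d)) d 0| ≤
                    C₁ * Real.log d ^ k) ∧
                (c₁ * (Real.log d ^ k)⁻¹ ≤
                    (d : ℝ) ^ Cb * |aCoef g τ (ρf d) (-(Cb * Real.log d)) d 2| ∧
                  (d : ℝ) ^ Cb * |aCoef g τ (ρf d) (-(Cb * Real.log d)) d 2| ≤
                    C₁ * Real.log d ^ k)) →
              (∀ᶠ d : ℕ in atTop,
                |aCoef g τ (ρf d) (-(Cb * Real.log d)) d 1| ≤ (d : ℝ) ^ (-C)) →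
              ∀ᶠ d : ℕ in atTop,
                |∫ z, g.eval z * z *
                    (if 0 < aCoef g τ (ρf d) (-(Cb * Real.log d)) d 0 * γf d ^ 2 +
                          aCoef g τ (ρf d) (-(Cb * Real.log d)) d 1 * z +
                          aCoef g τ (ρf d) (-(Cb * Real.log d)) d 2 * γf d * He 2 z
                      then (1 : ℝ) else 0) ∂(gaussianReal 0 1)| ≤ (d : ℝ) ^ (-C') :=
  even_link_first_coefficient_small_general g hgev
end
end
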